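/- arXiv:1710.01170 — 3 statements merged into one kernel-verified Lean document; each statement's English description precedes it below -/
import Mathlib

section
/- Let L ⊂ ℝⁿ be a convex body with 0 ∈ int L and L ⊂ −rL for some r ≥ 1. Let z ∈ (1−C)L for some 0 < C ≤ 1. Then the modulus of convexity of the translated body L_z = L − z satisfies δ_{L_z}(t) ≥ δ_L(Ct) / (1 + (1−C)r) for every 0 ≤ t ≤ 1. -/
/-!
Write `K = 1 + (1 - C) r`. Since `z = (1 - C) l` with `l ∈ L`, convexity gives `C • L ⊆ L - z`,
so two points that are `t`-apart for `L - z` are `C t`-apart for `L` after translating back by `z`.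
For the midpoint `m - z` (with `m ∈ L`), write `m = gauge L m • a` with `a ∈ L` and
`-z = ρ • b` with `b ∈ L`, `ρ = (1 - C) r`. Then
`s • a - z = s • (a - z) + ((1 - s) ρ / K) • (b - z)`, and subadditivity of the gauge of `L - z`
gives `gauge (L - z) (m - z) ≤ 1 - (1 - gauge L m) / K`.
-/

open Pointwise

/-- The (possibly asymmetric) modulus of convexity of a convex body `M` with `0` in its
interior, measured via the gauge function of `M`. -/
noncomputable def modConv {n : ℕ} (M : Set (EuclideanSpace ℝ (Fin n))) (t : ℝ) : ℝ :=
  sInf {s : ℝ | ∃ x ∈ M, ∃ y ∈ M, t ≤ gauge M (x - y) ∧ s = 1 - gauge M ((2 : ℝ)⁻¹ • (x + y))}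

open Topology Filter Bornology

section Algebra

variable {E : Type*} [AddCommGroup E] [Module ℝ E] {L M : Set E} {z : E}

omit [Module ℝ E] in
lemma mem_image_sub_const_iff {w : E} : w ∈ (· - z) '' L ↔ w + z ∈ L :=
  ⟨by rintro ⟨a, ha, rfl⟩; simpa using ha, fun h => ⟨w + z, h, add_sub_cancel_right w z⟩⟩

lemma Convex.image_sub_const (hL : Convex ℝ L) (z : E) : Convex ℝ ((· - z) '' L) := by
  simpa [sub_eq_neg_add] using hL.translate (-z)

lemma Convex.inv_two_smul_add_mem (hM : Convex ℝ M) {x y : E} (hx : x ∈ M) (hy : y ∈ M) :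
    (2 : ℝ)⁻¹ • (x + y) ∈ M := by
  rw [smul_add]
  exact hM hx hy (by norm_num) (by norm_num) (by norm_num)

lemma Convex.smul_subset_image_sub (hL : Convex ℝ L) {C : ℝ} (hC0 : 0 ≤ C) (hC1 : C ≤ 1)
    (hz : z ∈ (1 - C) • L) : C • L ⊆ (· - z) '' L := by
  obtain ⟨l, hl, rfl⟩ := hz
  rintro _ ⟨a, ha, rfl⟩
  rw [mem_image_sub_const_iff]
  exact hL ha hl hC0 (by linarith) (by ring)

lemma gauge_image_sub_smul_sub_le (hL : Convex ℝ L) (habs : Absorbent ℝ ((· - z) '' L))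
    {ρ s : ℝ} (hρ : 0 ≤ ρ) (hz : -z ∈ ρ • L) {a : E} (ha : a ∈ L) (hs0 : 0 ≤ s) (hs1 : s ≤ 1) :
    gauge ((· - z) '' L) (s • a - z) ≤ 1 - (1 - s) / (1 + ρ) := by
  obtain ⟨b, hb, hbz⟩ := hz
  have hρ1 : 0 < 1 + ρ := by linarith
  have hc : 0 ≤ (1 - s) * ρ / (1 + ρ) := by have := sub_nonneg.2 hs1; positivity
  have hdecomp : s • a - z = s • (a - z) + ((1 - s) * ρ / (1 + ρ)) • (b - z) := by
    have hb' : b - z = (1 + ρ) • b := by rw [← neg_neg z, ← hbz]; module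
    rw [hb', smul_smul, div_mul_cancel₀ _ hρ1.ne', ← neg_neg z, ← hbz]
    module
  have hgauge_le : ∀ p ∈ L, gauge ((· - z) '' L) (p - z) ≤ 1 := fun p hp =>
    gauge_le_one_of_mem (mem_image_sub_const_iff.2 (by simpa using hp))
  calc gauge ((· - z) '' L) (s • a - z)
      ≤ s * gauge ((· - z) '' L) (a - z)
          + (1 - s) * ρ / (1 + ρ) * gauge ((· - z) '' L) (b - z) := by
        rw [hdecomp]
        refine (gauge_add_le (hL.image_sub_const z) habs _ _).trans_eq ?_
        rw [gauge_smul_of_nonneg hs0, gauge_smul_of_nonneg hc, smul_eq_mul, smul_eq_mul]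
    _ ≤ s * 1 + (1 - s) * ρ / (1 + ρ) * 1 := by
        gcongr
        · exact hgauge_le a ha
        · exact hgauge_le b hb
    _ = 1 - (1 - s) / (1 + ρ) := by field_simp; ring

end Algebra

section Topology

variable {E : Type*} [AddCommGroup E] [Module ℝ E] [TopologicalSpace E] [ContinuousSMul ℝ E]
  {L M : Set E}

lemma mem_nhds_zero_of_smul_subset (hL : L ∈ 𝓝 0) {C : ℝ} (hC : C ≠ 0) (h : C • L ⊆ M) :
    M ∈ 𝓝 0 :=
  mem_of_superset ((set_smul_mem_nhds_zero_iff hC).2 hL) h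

lemma mul_gauge_le_of_smul_subset (hL : L ∈ 𝓝 0) {C : ℝ} (hC : 0 < C) (h : C • L ⊆ M) (x : E) :
    C * gauge M x ≤ gauge L x := by
  have := gauge_mono (absorbent_nhds_zero ((set_smul_mem_nhds_zero_iff hC.ne').2 hL)) h x
  rw [gauge_smul_left_of_nonneg hC.le, Pi.smul_apply, smul_eq_mul] at this
  rwa [← le_inv_mul_iff₀ hC]

variable [IsTopologicalAddGroup E] [T1Space E]

lemma mem_gauge_smul_self (hc : Convex ℝ M) (h₀ : M ∈ 𝓝 0) (hcl : IsClosed M)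
    (hb : IsVonNBounded ℝ M) (x : E) : x ∈ gauge M x • M := by
  rcases eq_or_ne x 0 with rfl | hx
  · exact Set.zero_mem_smul_set (mem_of_mem_nhds h₀)
  have hpos : 0 < gauge M x := (gauge_pos (absorbent_nhds_zero h₀) hb).2 hx
  rw [Set.mem_smul_set_iff_inv_smul_mem₀ hpos.ne']
  refine hcl.closure_subset ((gauge_le_one_iff_mem_closure hc h₀).1 ?_)
  rw [gauge_smul_of_nonneg (inv_nonneg.2 hpos.le), smul_eq_mul, inv_mul_cancel₀ hpos.ne']

lemma exists_mem_gauge_eq_one [Nontrivial E] (hc : Convex ℝ M) (h₀ : M ∈ 𝓝 0)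
    (hcl : IsClosed M) (hb : IsVonNBounded ℝ M) : ∃ p ∈ M, gauge M p = 1 := by
  obtain ⟨x, hx⟩ := exists_ne (0 : E)
  obtain ⟨p, hp, hpx⟩ := mem_gauge_smul_self hc h₀ hcl hb x
  have hpos : 0 < gauge M x := (gauge_pos (absorbent_nhds_zero h₀) hb).2 hx
  refine ⟨p, hp, ?_⟩
  have := congrArg (gauge M) hpx
  rw [gauge_smul_of_nonneg hpos.le, smul_eq_mul] at this
  exact (mul_eq_left₀ hpos.ne').1 this

end Topology

def modConvSet {E : Type*} [AddCommGroup E] [Module ℝ E] (M : Set E) (t : ℝ) : Set ℝ :=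
  {s : ℝ | ∃ x ∈ M, ∃ y ∈ M, t ≤ gauge M (x - y) ∧ s = 1 - gauge M ((2 : ℝ)⁻¹ • (x + y))}

lemma modConv_eq_sInf {n : ℕ} (M : Set (EuclideanSpace ℝ (Fin n))) (t : ℝ) :
    modConv M t = sInf (modConvSet M t) :=
  rfl

section ModulusOfConvexity

variable {E : Type*} [AddCommGroup E] [Module ℝ E] {M : Set E} {s t : ℝ}

lemma nonneg_of_mem_modConvSet (hc : Convex ℝ M) (hs : s ∈ modConvSet M t) : 0 ≤ s := by
  obtain ⟨x, hx, y, hy, -, rfl⟩ := hs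
  exact sub_nonneg.2 (gauge_le_one_of_mem (hc.inv_two_smul_add_mem hx hy))

lemma modConvSet_nonempty_of_nonpos (h₀ : (0 : E) ∈ M) (ht : t ≤ 0) :
    (modConvSet M t).Nonempty :=
  ⟨_, 0, h₀, 0, h₀, by rwa [sub_zero, gauge_zero], rfl⟩

variable [TopologicalSpace E] [IsTopologicalAddGroup E] [ContinuousSMul ℝ E] [T1Space E]

lemma modConvSet_nonempty [Nontrivial E] (hc : Convex ℝ M) (h₀ : M ∈ 𝓝 0) (hcl : IsClosed M)
    (hb : IsVonNBounded ℝ M) (ht : t ≤ 1) : (modConvSet M t).Nonempty := by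
  obtain ⟨p, hp, hp1⟩ := exists_mem_gauge_eq_one hc h₀ hcl hb
  exact ⟨_, p, hp, 0, mem_of_mem_nhds h₀, by rwa [sub_zero, hp1], rfl⟩

lemma sInf_modConvSet_div_le_of_mem_image_sub {L : Set E} {z : E} {C ρ : ℝ} (hc : Convex ℝ L)
    (h₀ : L ∈ 𝓝 0) (hcl : IsClosed L) (hb : IsVonNBounded ℝ L) (hC : 0 < C)
    (hCL : C • L ⊆ (· - z) '' L) (hρ : 0 ≤ ρ) (hz : -z ∈ ρ • L)
    (hs : s ∈ modConvSet ((· - z) '' L) t) :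
    sInf (modConvSet L (C * t)) / (1 + ρ) ≤ s := by
  obtain ⟨x, hx, y, hy, hxy, rfl⟩ := hs
  rw [mem_image_sub_const_iff] at hx hy
  have hLz₀ := mem_nhds_zero_of_smul_subset h₀ hC.ne' hCL
  have hdist : C * t ≤ gauge L (x + z - (y + z)) :=
    calc C * t ≤ C * gauge ((· - z) '' L) (x - y) := by gcongr
      _ ≤ gauge L (x - y) := mul_gauge_le_of_smul_subset h₀ hC hCL _
      _ = gauge L (x + z - (y + z)) := by rw [add_sub_add_right_eq_sub]
  set m := (2 : ℝ)⁻¹ • (x + z + (y + z))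
  have hm : m ∈ L := hc.inv_two_smul_add_mem hx hy
  have hδ : sInf (modConvSet L (C * t)) ≤ 1 - gauge L m :=
    csInf_le ⟨0, fun _ => nonneg_of_mem_modConvSet hc⟩ ⟨_, hx, _, hy, hdist, rfl⟩
  obtain ⟨a, ha, ham : gauge L m • a = m⟩ := mem_gauge_smul_self hc h₀ hcl hb m
  have hkey := gauge_image_sub_smul_sub_le hc (absorbent_nhds_zero hLz₀) hρ hz ha
    (gauge_nonneg m) (gauge_le_one_of_mem hm)
  rw [ham, show m - z = (2 : ℝ)⁻¹ • (x + y) by module] at hkey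
  calc sInf (modConvSet L (C * t)) / (1 + ρ) ≤ (1 - gauge L m) / (1 + ρ) := by gcongr
    _ ≤ 1 - gauge ((· - z) '' L) ((2 : ℝ)⁻¹ • (x + y)) := by linarith

end ModulusOfConvexity

theorem modConv_translate_ge {n : ℕ} (L : Set (EuclideanSpace ℝ (Fin n)))
    (hLcomp : IsCompact L) (hLconv : Convex ℝ L) (h0 : 0 ∈ interior L)
    (r : ℝ) (hr : 1 ≤ r) (hLr : L ⊆ (-r) • L)
    (C : ℝ) (hC0 : 0 < C) (hC1 : C ≤ 1)
    (z : EuclideanSpace ℝ (Fin n)) (hz : z ∈ (1 - C) • L)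
    (t : ℝ) (ht0 : 0 ≤ t) (ht1 : t ≤ 1) :
    modConv ((fun w => w - z) '' L) t ≥ modConv L (C * t) / (1 + (1 - C) * r) := by
  have hL₀ : L ∈ 𝓝 0 := mem_interior_iff_mem_nhds.1 h0
  have hCL := hLconv.smul_subset_image_sub hC0.le hC1 hz
  have hLz₀ := mem_nhds_zero_of_smul_subset hL₀ hC0.ne' hCL
  have hLzcomp : IsCompact ((fun w => w - z) '' L) := hLcomp.image (by fun_prop)
  have hzr : -z ∈ ((1 - C) * r) • L := by
    obtain ⟨l, hl, rfl⟩ := hz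
    obtain ⟨b, hb, hbl⟩ := hLr hl
    exact ⟨b, hb, by simp only at hbl ⊢; rw [← hbl]; module⟩
  rw [modConv_eq_sInf, modConv_eq_sInf, ge_iff_le]
  -- `sInf ∅ = 0`, so the infimum over `L - z` has to be shown to range over a nonempty set.
  rcases (modConvSet L (C * t)).eq_empty_or_nonempty with hempty | ⟨_, x, -, y, -, hxy, -⟩
  · rw [hempty, Real.sInf_empty, zero_div]
    exact Real.sInf_nonneg fun _ => nonneg_of_mem_modConvSet (hLconv.image_sub_const z)
  refine le_csInf ?_ fun s hs => sInf_modConvSet_div_le_of_mem_image_sub hLconv hL₀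
    hLcomp.isClosed (hLcomp.isVonNBounded ℝ) hC0 hCL (by nlinarith) hzr hs
  rcases ht0.eq_or_lt with rfl | htpos
  · exact modConvSet_nonempty_of_nonpos (mem_of_mem_nhds hLz₀) le_rfl
  have : Nontrivial (EuclideanSpace ℝ (Fin n)) := nontrivial_of_ne (x - y) 0 fun hxy0 => by
    rw [hxy0, gauge_zero] at hxy
    nlinarith
  exact modConvSet_nonempty (hLconv.image_sub_const z) hLz₀ hLzcomp.isClosed
    (hLzcomp.isVonNBounded ℝ) ht1
end

section
/- Let L ⊂ ℝⁿ be a convex body with 0 ∈ int L and L ⊂ −nL, and let z ∈ (n/(n+1))L. Then δ_{(L_z)°}(t) ≥ δ_{L°}(t/(4n³)) / (2n) for every 0 ≤ t ≤ 1. -/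
open Pointwise

/-- The polar body of a set in Euclidean space. -/
def polarSet {n : ℕ} (M : Set (EuclideanSpace ℝ (Fin n))) : Set (EuclideanSpace ℝ (Fin n)) :=
  {x | ∀ y ∈ M, inner ℝ x y ≤ (1 : ℝ)}

/-!
Write `h` for the support function of `L`. The gauge of `L°` is `h` and the gauge of `(L - z)°` is
`h - ⟪·, z⟫`, so `x ∈ (L - z)°` iff `h x ≤ 1 + ⟪x, z⟫`. Hence the projective map
`x ↦ x / (1 + ⟪x, z⟫)` sends `(L - z)°` into `L°`, and the hypotheses `L ⊆ -nL`, `z ∈ (n/(n+1))L`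
keep the factor `1 + ⟪x, z⟫` within `[1/(n+1), n+1]`. For `n ≥ 2`, if `x, y` are at gauge
distance `t` in `(L - z)°`, their images `u, v` satisfy `h (u - v) ≥ t/(4n³)` or
`h (v - u) ≥ t/(4n³)` (the latter, when the two factors differ a lot, through
`⟪v - u, z⟫ ≤ h (v - u)`), while the depth `1 - h` of the midpoint of `u, v` is at most `n + 1 ≤ 2n`
times that of the midpoint of `x, y` in `(L - z)°`. For `n = 1` these constants are too weak; there
both polar bodies are intervals, the modulus of `(L - z)°` at `t` is at least `t/6`, and
`δ_{L°}(s) ≤ s/2` holds for every body.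
-/

open Bornology Filter Topology
open scoped RealInnerProductSpace

section SupportFunction

variable {E : Type*} [NormedAddCommGroup E] [InnerProductSpace ℝ E] {M : Set E}

noncomputable def supportFun (M : Set E) (x : E) : ℝ :=
  sSup ((fun y => ⟪x, y⟫) '' M)

theorem bddAbove_inner_image (hM : IsBounded M) (x : E) : BddAbove ((fun y => ⟪x, y⟫) '' M) := by
  obtain ⟨C, hC⟩ := hM.exists_norm_le
  refine ⟨‖x‖ * C, ?_⟩
  rintro _ ⟨y, hy, rfl⟩
  exact (real_inner_le_norm x y).trans (mul_le_mul_of_nonneg_left (hC y hy) (norm_nonneg x))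

theorem inner_le_supportFun (hM : IsBounded M) (x : E) {y : E} (hy : y ∈ M) :
    ⟪x, y⟫ ≤ supportFun M x :=
  le_csSup (bddAbove_inner_image hM x) ⟨y, hy, rfl⟩

theorem supportFun_le (hne : M.Nonempty) {x : E} {c : ℝ} (h : ∀ y ∈ M, ⟪x, y⟫ ≤ c) :
    supportFun M x ≤ c :=
  csSup_le (hne.image _) (by rintro _ ⟨y, hy, rfl⟩; exact h y hy)

theorem supportFun_nonneg (hM : IsBounded M) (h0 : 0 ∈ M) (x : E) : 0 ≤ supportFun M x := by
  simpa using inner_le_supportFun hM x h0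

theorem supportFun_smul (M : Set E) {c : ℝ} (hc : 0 ≤ c) (x : E) :
    supportFun M (c • x) = c * supportFun M x := by
  have : (fun y => ⟪c • x, y⟫) '' M = c • (fun y => ⟪x, y⟫) '' M := by
    rw [← Set.image_smul, Set.image_image]
    simp only [real_inner_smul_left, smul_eq_mul]
  rw [supportFun, this, Real.sSup_smul_of_nonneg hc, smul_eq_mul, supportFun]

theorem supportFun_smul_add_smul_le (hM : IsBounded M) (hne : M.Nonempty) {a b : ℝ} (ha : 0 ≤ a)
    (hb : 0 ≤ b) (x y : E) :
    supportFun M (a • x + b • y) ≤ a * supportFun M x + b * supportFun M y := by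
  refine supportFun_le hne fun w hw => ?_
  rw [inner_add_left, real_inner_smul_left, real_inner_smul_left]
  gcongr <;> exact inner_le_supportFun hM _ hw

theorem supportFun_midpoint_le (hM : IsBounded M) (hne : M.Nonempty) (x y : E) :
    supportFun M ((2 : ℝ)⁻¹ • (x + y)) ≤ (supportFun M x + supportFun M y) / 2 := by
  have := supportFun_smul_add_smul_le hM hne (a := 2⁻¹) (b := 2⁻¹) (by norm_num) (by norm_num) x y
  rw [← smul_add] at this
  linarith

theorem supportFun_smul_eq_abs_mul {e : E} (he : supportFun M (-e) = supportFun M e) (c : ℝ) :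
    supportFun M (c • e) = |c| * supportFun M e := by
  rcases le_total 0 c with hc | hc
  · rw [supportFun_smul M hc, abs_of_nonneg hc]
  · rw [← neg_smul_neg, supportFun_smul M (neg_nonneg.2 hc), he, abs_of_nonpos hc]

theorem supportFun_image_sub (hM : IsBounded M) (hne : M.Nonempty) (z x : E) :
    supportFun ((· - z) '' M) x = supportFun M x - ⟪x, z⟫ := by
  have hM' : IsBounded ((· - z) '' M) := Set.sub_singleton (b := z) ▸ hM.sub isBounded_singleton
  refine le_antisymm (supportFun_le (hne.image _) ?_) ?_
  · rintro _ ⟨w, hw, rfl⟩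
    rw [inner_sub_right]
    linarith [inner_le_supportFun hM x hw]
  · rw [sub_le_iff_le_add]
    refine supportFun_le hne fun w hw => ?_
    have := inner_le_supportFun hM' x ⟨w, hw, rfl⟩
    rw [inner_sub_right] at this
    linarith

theorem supportFun_pos (hM : IsBounded M) (h0 : 0 ∈ interior M) {x : E} (hx : x ≠ 0) :
    0 < supportFun M x := by
  have hlim : Tendsto (fun c : ℝ => c • x) (𝓝[>] 0) (𝓝 0) :=
    ((continuous_id.smul continuous_const).tendsto' 0 0 (zero_smul ℝ x)).mono_left
      nhdsWithin_le_nhds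
  obtain ⟨c, hcM, hc⟩ :=
    ((hlim.eventually (mem_interior_iff_mem_nhds.1 h0)).and self_mem_nhdsWithin).exists
  calc 0 < c * ‖x‖ ^ 2 := mul_pos hc (pow_pos (norm_pos_iff.2 hx) 2)
    _ = ⟪x, c • x⟫ := by rw [real_inner_smul_right, real_inner_self_eq_norm_sq]
    _ ≤ supportFun M x := inner_le_supportFun hM x hcM

theorem inner_le_mul_supportFun_of_mem_smul (hM : IsBounded M) {c : ℝ} (hc : 0 ≤ c) {z : E}
    (hz : z ∈ c • M) (x : E) : ⟪x, z⟫ ≤ c * supportFun M x := by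
  obtain ⟨w, hw, rfl⟩ := hz
  rw [real_inner_smul_right]
  exact mul_le_mul_of_nonneg_left (inner_le_supportFun hM x hw) hc

theorem supportFun_neg_le_of_subset_neg_smul (hM : IsBounded M) (hne : M.Nonempty) {N : ℝ}
    (hN : 0 ≤ N) (hMN : M ⊆ (-N) • M) (x : E) : supportFun M (-x) ≤ N * supportFun M x := by
  refine supportFun_le hne fun y hy => ?_
  obtain ⟨w, hw, rfl⟩ := hMN hy
  rw [inner_neg_left, real_inner_smul_right, neg_mul, neg_neg]
  exact mul_le_mul_of_nonneg_left (inner_le_supportFun hM x hw) hN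

end SupportFunction

theorem gauge_midpoint_le_one {E : Type*} [AddCommGroup E] [Module ℝ E] {M : Set E}
    (hM : Convex ℝ M) {x y : E} (hx : x ∈ M) (hy : y ∈ M) :
    gauge M ((2 : ℝ)⁻¹ • (x + y)) ≤ 1 := by
  rw [smul_add]
  exact gauge_le_one_of_mem (hM hx hy (by norm_num) (by norm_num) (by norm_num))

section ModulusOfConvexity

variable {n : ℕ} {M : Set (EuclideanSpace ℝ (Fin n))} {t : ℝ}

theorem modConv_nonneg (hM : Convex ℝ M) (t : ℝ) : 0 ≤ modConv M t :=
  Real.sInf_nonneg <| by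
    rintro _ ⟨x, hx, y, hy, -, rfl⟩
    linarith [gauge_midpoint_le_one hM hx hy]

theorem modConv_le (hM : Convex ℝ M) {x y : EuclideanSpace ℝ (Fin n)} (hx : x ∈ M) (hy : y ∈ M)
    (ht : t ≤ gauge M (x - y)) : modConv M t ≤ 1 - gauge M ((2 : ℝ)⁻¹ • (x + y)) := by
  refine csInf_le ⟨0, ?_⟩ ⟨x, hx, y, hy, ht, rfl⟩
  rintro _ ⟨x, hx, y, hy, -, rfl⟩
  linarith [gauge_midpoint_le_one hM hx hy]

theorem le_modConv {p : EuclideanSpace ℝ (Fin n)} {c : ℝ} (h0 : 0 ∈ M) (hp : p ∈ M)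
    (hgp : gauge M p = 1) (ht : t ≤ 1)
    (h : ∀ x ∈ M, ∀ y ∈ M, t ≤ gauge M (x - y) → c ≤ 1 - gauge M ((2 : ℝ)⁻¹ • (x + y))) :
    c ≤ modConv M t := by
  refine le_csInf ⟨_, p, hp, 0, h0, by rwa [sub_zero, hgp], rfl⟩ ?_
  rintro _ ⟨x, hx, y, hy, hxy, rfl⟩
  exact h x hx y hy hxy

theorem modConv_le_half (hM : Convex ℝ M) (h0 : 0 ∈ M) {p : EuclideanSpace ℝ (Fin n)}
    (hp : p ∈ M) (hgp : gauge M p = 1) (ht0 : 0 ≤ t) (ht1 : t ≤ 1) : modConv M t ≤ t / 2 := by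
  have hq : (1 - t) • p ∈ M := hM.smul_mem_of_zero_mem h0 hp ⟨by linarith, by linarith⟩
  have hdiff : gauge M (p - (1 - t) • p) = t := by
    rw [show p - (1 - t) • p = t • p by module, gauge_smul_of_nonneg ht0, hgp, smul_eq_mul,
      mul_one]
  calc modConv M t ≤ 1 - gauge M ((2 : ℝ)⁻¹ • (p + (1 - t) • p)) := modConv_le hM hp hq hdiff.ge
    _ = t / 2 := by
      rw [show (2 : ℝ)⁻¹ • (p + (1 - t) • p) = (1 - t / 2) • p by module,
        gauge_smul_of_nonneg (by linarith), hgp, smul_eq_mul]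
      ring

end ModulusOfConvexity

section Polar

variable {n : ℕ} {M : Set (EuclideanSpace ℝ (Fin n))}

theorem zero_mem_polarSet (M : Set (EuclideanSpace ℝ (Fin n))) : 0 ∈ polarSet M := by
  simp [polarSet]

theorem convex_polarSet (M : Set (EuclideanSpace ℝ (Fin n))) : Convex ℝ (polarSet M) := by
  intro x hx y hy a b ha hb hab w hw
  rw [inner_add_left, real_inner_smul_left, real_inner_smul_left]
  nlinarith [hx w hw, hy w hw]

theorem mem_polarSet_iff (hM : IsBounded M) (hne : M.Nonempty) {x : EuclideanSpace ℝ (Fin n)} :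
    x ∈ polarSet M ↔ supportFun M x ≤ 1 :=
  ⟨supportFun_le hne, fun h _ hy => (inner_le_supportFun hM x hy).trans h⟩

theorem gauge_polarSet (hM : IsBounded M) (hne : M.Nonempty)
    (hnn : ∀ x, 0 ≤ supportFun M x) : gauge (polarSet M) = supportFun M := by
  ext x
  have hset : {r : ℝ | 0 < r ∧ x ∈ r • polarSet M} = Set.Ioi 0 ∩ Set.Ici (supportFun M x) := by
    ext r
    simp only [Set.mem_ofPred_eq, Set.mem_inter_iff, Set.mem_Ioi, Set.mem_Ici]
    refine and_congr_right fun hr => ?_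
    rw [Set.mem_smul_set_iff_inv_smul_mem₀ hr.ne', mem_polarSet_iff hM hne,
      supportFun_smul M (inv_nonneg.2 hr.le), inv_mul_le_iff₀ hr, mul_one]
  rw [gauge, hset]
  rcases (hnn x).eq_or_lt with h | h
  · rw [← h, Set.inter_eq_left.2 Set.Ioi_subset_Ici_self, csInf_Ioi]
  · rw [Set.inter_eq_right.2 (Set.Ici_subset_Ioi.2 h), csInf_Ici]

theorem exists_mem_polarSet_gauge_eq_one (hM : IsBounded M) (hne : M.Nonempty)
    (hnn : ∀ x, 0 ≤ supportFun M x) {e : EuclideanSpace ℝ (Fin n)} (he : 0 < supportFun M e) :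
    ∃ p ∈ polarSet M, gauge (polarSet M) p = 1 := by
  have hp : supportFun M ((supportFun M e)⁻¹ • e) = 1 := by
    rw [supportFun_smul M (inv_nonneg.2 he.le), inv_mul_cancel₀ he.ne']
  exact ⟨_, (mem_polarSet_iff hM hne).2 hp.le, by rw [gauge_polarSet hM hne hnn, hp]⟩

end Polar

section Translate

variable {E : Type*} [NormedAddCommGroup E] [InnerProductSpace ℝ E] {L : Set E} {z x y : E}
  {N t : ℝ}

noncomputable def perspective (z x : E) : E := (1 + ⟪x, z⟫)⁻¹ • x

theorem smul_perspective (hx : 1 + ⟪x, z⟫ ≠ 0) : (1 + ⟪x, z⟫) • perspective z x = x :=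
  smul_inv_smul₀ hx x

theorem inner_perspective (hx : 1 + ⟪x, z⟫ ≠ 0) : ⟪perspective z x, z⟫ = 1 - (1 + ⟪x, z⟫)⁻¹ := by
  rw [perspective, real_inner_smul_left]
  field_simp
  ring

theorem supportFun_perspective_le_one (hx0 : 0 < 1 + ⟪x, z⟫)
    (hx : supportFun L x ≤ 1 + ⟪x, z⟫) : supportFun L (perspective z x) ≤ 1 := by
  rw [perspective, supportFun_smul L (inv_nonneg.2 hx0.le)]
  exact inv_mul_le_one_of_le₀ hx hx0.le

theorem one_add_inner_mem_Icc (hL : IsBounded L) (h0 : 0 ∈ L) (hN : 0 ≤ N)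
    (hup : ∀ P, ⟪P, z⟫ ≤ N / (N + 1) * supportFun L P)
    (hneg : ∀ P, supportFun L (-P) ≤ N * supportFun L P) (hx : supportFun L x ≤ 1 + ⟪x, z⟫) :
    1 + ⟪x, z⟫ ∈ Set.Icc (N + 1)⁻¹ (N + 1) := by
  have hN1 : 0 < N + 1 := by linarith
  have hfwd : (N + 1) * ⟪x, z⟫ ≤ N * supportFun L x := by
    have := hup x
    rwa [div_mul_eq_mul_div, le_div_iff₀ hN1, mul_comm] at this
  have hbwd : -⟪x, z⟫ ≤ N * supportFun L x :=
    calc -⟪x, z⟫ = ⟪-x, z⟫ := (inner_neg_left x z).symm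
      _ ≤ N / (N + 1) * supportFun L (-x) := hup (-x)
      _ ≤ 1 * (N * supportFun L x) :=
        mul_le_mul (div_le_one_of_le₀ (by linarith) hN1.le) (hneg x)
          (supportFun_nonneg hL h0 _) zero_le_one
      _ = N * supportFun L x := one_mul _
  have hNx := mul_le_mul_of_nonneg_left hx hN
  constructor
  · rw [inv_le_iff_one_le_mul₀ hN1]
    nlinarith
  · nlinarith

theorem one_add_inner_pos (hN : 0 ≤ N) (hx : 1 + ⟪x, z⟫ ∈ Set.Icc (N + 1)⁻¹ (N + 1)) :
    0 < 1 + ⟪x, z⟫ :=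
  (inv_pos.2 (by linarith)).trans_le hx.1

theorem one_sub_supportFun_midpoint_perspective_le (hL : IsBounded L) (h0 : 0 ∈ L) (hN : 0 ≤ N)
    (hup : ∀ P, ⟪P, z⟫ ≤ N / (N + 1) * supportFun L P)
    (hneg : ∀ P, supportFun L (-P) ≤ N * supportFun L P)
    (hx : supportFun L x ≤ 1 + ⟪x, z⟫) (hy : supportFun L y ≤ 1 + ⟪y, z⟫) :
    1 - supportFun L ((2 : ℝ)⁻¹ • (perspective z x + perspective z y)) ≤
      (N + 1) * (1 + ⟪(2 : ℝ)⁻¹ • (x + y), z⟫ - supportFun L ((2 : ℝ)⁻¹ • (x + y))) := by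
  wlog hxy : ⟪x, z⟫ ≤ ⟪y, z⟫ generalizing x y
  · rw [add_comm (perspective z x), add_comm x]
    exact this hy hx (le_of_not_ge hxy)
  have hLne : L.Nonempty := ⟨0, h0⟩
  have ha := one_add_inner_mem_Icc hL h0 hN hup hneg hx
  have ha0 := one_add_inner_pos hN ha
  have hd0 := one_add_inner_pos hN (one_add_inner_mem_Icc hL h0 hN hup hneg hy)
  have hu := supportFun_perspective_le_one ha0 hx
  have hv := supportFun_perspective_le_one hd0 hy
  have hinner : ⟪(2 : ℝ)⁻¹ • (x + y), z⟫ = ((1 + ⟪x, z⟫) + (1 + ⟪y, z⟫)) / 2 - 1 := by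
    rw [real_inner_smul_left, inner_add_left]
    ring
  set a := 1 + ⟪x, z⟫
  set d := 1 + ⟪y, z⟫
  set u := perspective z x
  set v := perspective z y
  have hmid_uv : supportFun L ((2 : ℝ)⁻¹ • (u + v)) ≤ 1 := by
    linarith [supportFun_midpoint_le hL hLne u v]
  have hmid : supportFun L ((2 : ℝ)⁻¹ • (x + y)) ≤
      a * supportFun L ((2 : ℝ)⁻¹ • (u + v)) + (d - a) / 2 * supportFun L v := by
    have hdecomp : (2 : ℝ)⁻¹ • (x + y) = a • ((2 : ℝ)⁻¹ • (u + v)) + ((d - a) / 2) • v := by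
      rw [← smul_perspective ha0.ne', ← smul_perspective hd0.ne']
      module
    rw [hdecomp]
    exact supportFun_smul_add_smul_le hL hLne ha0.le (by linarith) _ _
  have hNa : 1 ≤ (N + 1) * a := by
    rw [mul_comm]
    exact (inv_le_iff_one_le_mul₀ (by linarith)).1 ha.1
  rw [hinner]
  nlinarith [mul_le_mul_of_nonneg_right hNa (sub_nonneg.2 hmid_uv),
    mul_le_of_le_one_right (by linarith : 0 ≤ (d - a) / 2) hv]

theorem supportFun_sub_le_perspective (hL : IsBounded L) (hne : L.Nonempty) (hN : 0 ≤ N)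
    (hneg : ∀ P, supportFun L (-P) ≤ N * supportFun L P) (hx0 : 0 < 1 + ⟪x, z⟫)
    (hy0 : 0 < 1 + ⟪y, z⟫) (hy : supportFun L (perspective z y) ≤ 1) :
    supportFun L (x - y) ≤ (1 + ⟪x, z⟫) * supportFun L (perspective z x - perspective z y) +
      max ((1 + ⟪x, z⟫) - (1 + ⟪y, z⟫)) (N * ((1 + ⟪y, z⟫) - (1 + ⟪x, z⟫))) := by
  set a := 1 + ⟪x, z⟫
  set d := 1 + ⟪y, z⟫
  set u := perspective z x
  set v := perspective z y
  have hdecomp : x - y = a • (u - v) + (a - d) • v := by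
    rw [← smul_perspective hx0.ne', ← smul_perspective hy0.ne']
    module
  rcases le_total d a with hda | had
  · calc supportFun L (x - y) ≤ a * supportFun L (u - v) + (a - d) * supportFun L v := by
          rw [hdecomp]
          exact supportFun_smul_add_smul_le hL hne hx0.le (by linarith) _ _
      _ ≤ a * supportFun L (u - v) + max (a - d) (N * (d - a)) := by
          gcongr
          exact (mul_le_of_le_one_right (by linarith) hy).trans (le_max_left _ _)
  · calc supportFun L (x - y) ≤ a * supportFun L (u - v) + (d - a) * supportFun L (-v) := by
          rw [show x - y = a • (u - v) + (d - a) • -v by rw [hdecomp]; module]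
          exact supportFun_smul_add_smul_le hL hne hx0.le (by linarith) _ _
      _ ≤ a * supportFun L (u - v) + max (a - d) (N * (d - a)) := by
          gcongr
          calc (d - a) * supportFun L (-v) ≤ (d - a) * N := by
                gcongr
                exact (hneg v).trans (mul_le_of_le_one_right hN hy)
            _ ≤ max (a - d) (N * (d - a)) := by rw [mul_comm]; exact le_max_right _ _

theorem div_le_or_div_le_inv_sub_inv {a d X : ℝ} (hN : 2 ≤ N) (ht : 0 ≤ t) (ha0 : 0 < a)
    (hd0 : 0 < d) (ha : a ≤ N + 1) (hd : d ≤ N + 1)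
    (h : t + (a - d) ≤ a * X + max (a - d) (N * (d - a))) :
    t / (4 * N ^ 3) ≤ X ∨ t / (4 * N ^ 3) ≤ a⁻¹ - d⁻¹ := by
  have hN0 : 0 ≤ N := by linarith
  set s := t / (4 * N ^ 3)
  have hs : 0 ≤ s := by positivity
  have hst : 4 * N ^ 3 * s = t := mul_div_cancel₀ t (by positivity)
  rcases le_total d a with hda | had
  · rw [max_eq_left (by nlinarith)] at h
    have hN3 : N + 1 ≤ 4 * N ^ 3 := by
      nlinarith [mul_nonneg (mul_nonneg hN0 hN0) (sub_nonneg.2 hN)]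
    left
    refine le_of_mul_le_mul_left ?_ ha0
    nlinarith [mul_le_mul_of_nonneg_right (ha.trans hN3) hs]
  by_cases hbig : a * d * s ≤ d - a
  · right
    rw [inv_sub_inv ha0.ne' hd0.ne', le_div_iff₀ (by positivity)]
    linarith
  · rw [max_eq_right (by nlinarith)] at h
    have hcube : a * (1 + (N + 1) * d) ≤ 4 * N ^ 3 :=
      calc a * (1 + (N + 1) * d) ≤ (N + 1) * (1 + (N + 1) * (N + 1)) := by gcongr
        _ ≤ 4 * N ^ 3 := by
          nlinarith [mul_nonneg (mul_nonneg hN0 hN0) (sub_nonneg.2 hN),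
            mul_nonneg hN0 (sub_nonneg.2 hN)]
    left
    refine le_of_mul_le_mul_left ?_ ha0
    nlinarith [mul_le_mul_of_nonneg_right hcube hs]

theorem le_supportFun_perspective_sub (hL : IsBounded L) (h0 : 0 ∈ L) (hN : 2 ≤ N)
    (hup : ∀ P, ⟪P, z⟫ ≤ N / (N + 1) * supportFun L P)
    (hneg : ∀ P, supportFun L (-P) ≤ N * supportFun L P) (ht : 0 ≤ t)
    (hx : supportFun L x ≤ 1 + ⟪x, z⟫) (hy : supportFun L y ≤ 1 + ⟪y, z⟫)
    (hxy : t + ⟪x - y, z⟫ ≤ supportFun L (x - y)) :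
    t / (4 * N ^ 3) ≤ supportFun L (perspective z x - perspective z y) ∨
      t / (4 * N ^ 3) ≤ supportFun L (perspective z y - perspective z x) := by
  have hN0 : 0 ≤ N := by linarith
  have ha := one_add_inner_mem_Icc hL h0 hN0 hup hneg hx
  have hd := one_add_inner_mem_Icc hL h0 hN0 hup hneg hy
  have ha0 := one_add_inner_pos hN0 ha
  have hd0 := one_add_inner_pos hN0 hd
  have hsub := supportFun_sub_le_perspective hL ⟨0, h0⟩ hN0 hneg ha0 hd0
    (supportFun_perspective_le_one hd0 hy)
  have hvu : (1 + ⟪x, z⟫)⁻¹ - (1 + ⟪y, z⟫)⁻¹ ≤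
      supportFun L (perspective z y - perspective z x) :=
    calc (1 + ⟪x, z⟫)⁻¹ - (1 + ⟪y, z⟫)⁻¹ = ⟪perspective z y - perspective z x, z⟫ := by
          rw [inner_sub_left, inner_perspective ha0.ne', inner_perspective hd0.ne']
          ring
      _ ≤ N / (N + 1) * supportFun L (perspective z y - perspective z x) := hup _
      _ ≤ _ := mul_le_of_le_one_left (supportFun_nonneg hL h0 _)
          (div_le_one_of_le₀ (by linarith) (by linarith))
  rw [inner_sub_left, show ⟪x, z⟫ - ⟪y, z⟫ = (1 + ⟪x, z⟫) - (1 + ⟪y, z⟫) by ring] at hxy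
  exact (div_le_or_div_le_inv_sub_inv hN ht ha0 hd0 ha.2 hd.2 (hxy.trans hsub)).imp id
    (·.trans hvu)

end Translate

section PolarOfTranslate

variable {n : ℕ} {L : Set (EuclideanSpace ℝ (Fin n))} {z x y : EuclideanSpace ℝ (Fin n)}
  {N t : ℝ}

theorem perspective_mem_polarSet (hL : IsBounded L) (h0 : 0 ∈ L) (hN : 0 ≤ N)
    (hup : ∀ P, ⟪P, z⟫ ≤ N / (N + 1) * supportFun L P)
    (hneg : ∀ P, supportFun L (-P) ≤ N * supportFun L P) (hx : supportFun L x ≤ 1 + ⟪x, z⟫) :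
    perspective z x ∈ polarSet L :=
  (mem_polarSet_iff hL ⟨0, h0⟩).2 <| supportFun_perspective_le_one
    (one_add_inner_pos hN (one_add_inner_mem_Icc hL h0 hN hup hneg hx)) hx

theorem modConv_polarSet_le_one_add_inner_midpoint_sub (hL : IsBounded L) (h0 : 0 ∈ L)
    (hN : 2 ≤ N) (hup : ∀ P, ⟪P, z⟫ ≤ N / (N + 1) * supportFun L P)
    (hneg : ∀ P, supportFun L (-P) ≤ N * supportFun L P) (ht : 0 ≤ t)
    (hx : supportFun L x ≤ 1 + ⟪x, z⟫) (hy : supportFun L y ≤ 1 + ⟪y, z⟫)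
    (hxy : t + ⟪x - y, z⟫ ≤ supportFun L (x - y)) :
    modConv (polarSet L) (t / (4 * N ^ 3)) ≤
      (N + 1) * (1 + ⟪(2 : ℝ)⁻¹ • (x + y), z⟫ - supportFun L ((2 : ℝ)⁻¹ • (x + y))) := by
  have hN0 : 0 ≤ N := by linarith
  have hK := gauge_polarSet hL ⟨0, h0⟩ (supportFun_nonneg hL h0)
  have hu := perspective_mem_polarSet hL h0 hN0 hup hneg hx
  have hv := perspective_mem_polarSet hL h0 hN0 hup hneg hy
  refine le_trans ?_ (one_sub_supportFun_midpoint_perspective_le hL h0 hN0 hup hneg hx hy)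
  rcases le_supportFun_perspective_sub hL h0 hN hup hneg ht hx hy hxy with h | h
  · have := modConv_le (convex_polarSet L) hu hv (hK ▸ h)
    rwa [hK] at this
  · have := modConv_le (convex_polarSet L) hv hu (hK ▸ h)
    rwa [hK, add_comm] at this

theorem le_modConv_polarSet_image_sub (hL : IsBounded L) (h0 : 0 ∈ L)
    (hzL : ∀ P, ⟪P, z⟫ ≤ supportFun L P) {e : EuclideanSpace ℝ (Fin n)}
    (he : ⟪e, z⟫ < supportFun L e) (ht : t ≤ 1) {c : ℝ}
    (h : ∀ x y, supportFun L x ≤ 1 + ⟪x, z⟫ → supportFun L y ≤ 1 + ⟪y, z⟫ →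
      t + ⟪x - y, z⟫ ≤ supportFun L (x - y) →
      c ≤ 1 + ⟪(2 : ℝ)⁻¹ • (x + y), z⟫ - supportFun L ((2 : ℝ)⁻¹ • (x + y))) :
    c ≤ modConv (polarSet ((· - z) '' L)) t := by
  have hne : L.Nonempty := ⟨0, h0⟩
  have hL' : IsBounded ((· - z) '' L) := Set.sub_singleton (b := z) ▸ hL.sub isBounded_singleton
  have hne' : ((· - z) '' L).Nonempty := hne.image _
  have hG : supportFun ((· - z) '' L) = fun P => supportFun L P - ⟪P, z⟫ :=
    funext (supportFun_image_sub hL hne z)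
  have hGnn : ∀ P, 0 ≤ supportFun ((· - z) '' L) P := fun P => by
    rw [hG]
    linarith [hzL P]
  have hK' := gauge_polarSet hL' hne' hGnn
  obtain ⟨p, hp, hgp⟩ := exists_mem_polarSet_gauge_eq_one hL' hne' hGnn (e := e)
    (by rw [hG]; linarith)
  refine le_modConv (zero_mem_polarSet _) hp hgp ht fun x hx y hy hxy => ?_
  rw [mem_polarSet_iff hL' hne', hG] at hx hy
  rw [hK', hG] at hxy ⊢
  dsimp only at hx hy hxy ⊢
  have := h x y (by linarith) (by linarith) (by linarith)
  linarith

theorem le_modConv_polarSet_image_sub_of_two_le (hL : IsBounded L) (h0 : 0 ∈ L) (hN : 2 ≤ N)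
    (hup : ∀ P, ⟪P, z⟫ ≤ N / (N + 1) * supportFun L P)
    (hneg : ∀ P, supportFun L (-P) ≤ N * supportFun L P) {e : EuclideanSpace ℝ (Fin n)}
    (he : 0 < supportFun L e) (ht0 : 0 ≤ t) (ht1 : t ≤ 1) :
    modConv (polarSet L) (t / (4 * N ^ 3)) / (2 * N) ≤ modConv (polarSet ((· - z) '' L)) t := by
  have hcoef : N / (N + 1) < 1 := (div_lt_one (by linarith)).2 (by linarith)
  have hzL : ∀ P, ⟪P, z⟫ ≤ supportFun L P := fun P =>
    (hup P).trans (mul_le_of_le_one_left (supportFun_nonneg hL h0 P) hcoef.le)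
  refine le_modConv_polarSet_image_sub hL h0 hzL ((hup e).trans_lt (mul_lt_of_lt_one_left he hcoef))
    ht1 fun x y hx hy hxy => ?_
  have hδ := modConv_polarSet_le_one_add_inner_midpoint_sub hL h0 hN hup hneg ht0 hx hy hxy
  have hm : 0 ≤ 1 + ⟪(2 : ℝ)⁻¹ • (x + y), z⟫ - supportFun L ((2 : ℝ)⁻¹ • (x + y)) := by
    rw [real_inner_smul_left, inner_add_left]
    linarith [supportFun_midpoint_le hL ⟨0, h0⟩ x y]
  rw [div_le_iff₀ (by linarith)]
  nlinarith

theorem div_six_le_one_add_mul_sub_abs_mul {h ζ ξ υ t : ℝ} (hζ : 2 * |ζ| ≤ h) (ht : 0 ≤ t)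
    (hξ : |ξ| * h ≤ 1 + ξ * ζ) (hυ : |υ| * h ≤ 1 + υ * ζ) (hξυ : t + (ξ - υ) * ζ ≤ |ξ - υ| * h) :
    t / 6 ≤ 1 + 2⁻¹ * (ξ + υ) * ζ - |2⁻¹ * (ξ + υ)| * h := by
  have hζ' := abs_le.1 (show |ζ| ≤ h / 2 by linarith)
  rcases abs_cases ξ with ⟨hx, hx'⟩ | ⟨hx, hx'⟩ <;>
  rcases abs_cases υ with ⟨hy, hy'⟩ | ⟨hy, hy'⟩ <;>
  rcases abs_cases (ξ - υ) with ⟨hxy, hxy'⟩ | ⟨hxy, hxy'⟩ <;>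
  rcases abs_cases (2⁻¹ * (ξ + υ)) with ⟨hm, hm'⟩ | ⟨hm, hm'⟩ <;>
  rw [hx] at hξ <;> rw [hy] at hυ <;> rw [hxy] at hξυ <;> rw [hm] <;>
  nlinarith [mul_nonneg (abs_nonneg (ξ - υ)) (by linarith : (0 : ℝ) ≤ h / 2 + ζ),
    mul_nonneg (abs_nonneg (ξ - υ)) (by linarith : (0 : ℝ) ≤ h / 2 - ζ)]

theorem le_modConv_polarSet_image_sub_of_dim_one {L : Set (EuclideanSpace ℝ (Fin 1))}
    {z : EuclideanSpace ℝ (Fin 1)} (hL : IsBounded L) (h0 : 0 ∈ interior L)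
    (hup : ∀ P, 2 * ⟪P, z⟫ ≤ supportFun L P) (hsymm : ∀ P, supportFun L (-P) ≤ supportFun L P)
    (ht0 : 0 ≤ t) (ht1 : t ≤ 1) :
    modConv (polarSet L) (t / 4) / 2 ≤ modConv (polarSet ((· - z) '' L)) t := by
  set e : EuclideanSpace ℝ (Fin 1) := EuclideanSpace.single 0 1
  have hcoord : ∀ v : EuclideanSpace ℝ (Fin 1), v = v 0 • e := by
    intro v
    ext i
    fin_cases i
    simp [e]
  have hL0 : 0 ∈ L := interior_subset h0
  have he : 0 < supportFun L e := supportFun_pos hL h0 (by simp [e])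
  have hHe := supportFun_smul_eq_abs_mul (le_antisymm (hsymm e) (by simpa using hsymm (-e)))
  have hζ : 2 * |⟪e, z⟫| ≤ supportFun L e := by
    have h2 := (hup (-e)).trans (hsymm e)
    rw [inner_neg_left] at h2
    rcases abs_cases ⟪e, z⟫ with ⟨h, -⟩ | ⟨h, -⟩ <;> rw [h] <;> linarith [hup e]
  have hrad : modConv (polarSet L) (t / 4) ≤ t / 8 := by
    obtain ⟨p, hp, hgp⟩ :=
      exists_mem_polarSet_gauge_eq_one hL ⟨0, hL0⟩ (supportFun_nonneg hL hL0) he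
    linarith [modConv_le_half (convex_polarSet L) (zero_mem_polarSet L) hp hgp
      (t := t / 4) (by linarith) (by linarith)]
  refine le_modConv_polarSet_image_sub hL hL0
    (fun P => by linarith [hup P, supportFun_nonneg hL hL0 P]) (e := e) (by linarith [hup e])
    ht1 fun x y hx hy hxy => ?_
  obtain ⟨ξ, rfl⟩ : ∃ ξ : ℝ, x = ξ • e := ⟨_, hcoord x⟩
  obtain ⟨υ, rfl⟩ : ∃ υ : ℝ, y = υ • e := ⟨_, hcoord y⟩
  rw [← sub_smul] at hxy
  rw [← add_smul, smul_smul]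
  simp only [real_inner_smul_left, hHe] at hx hy hxy ⊢
  linarith [div_six_le_one_add_mul_sub_abs_mul hζ ht0 hx hy hxy]

end PolarOfTranslate

theorem modConv_polar_translate_ge_general_general {n : ℕ} (L : Set (EuclideanSpace ℝ (Fin n)))
    (hLcomp : IsCompact L) (h0 : 0 ∈ interior L)
    (hLn : L ⊆ (-(n : ℝ)) • L)
    (z : EuclideanSpace ℝ (Fin n)) (hz : z ∈ ((n : ℝ) / ((n : ℝ) + 1)) • L)
    (t : ℝ) (ht0 : 0 ≤ t) (ht1 : t ≤ 1) :
    modConv (polarSet ((fun w => w - z) '' L)) t ≥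
      modConv (polarSet L) (t / (4 * (n : ℝ) ^ 3)) / (2 * (n : ℝ)) := by
  rcases n.eq_zero_or_pos with rfl | hn
  · simpa using modConv_nonneg (convex_polarSet _) t
  have hL := hLcomp.isBounded
  have hne : L.Nonempty := ⟨0, interior_subset h0⟩
  have hup := inner_le_mul_supportFun_of_mem_smul hL (by positivity) hz
  have hneg := supportFun_neg_le_of_subset_neg_smul hL hne n.cast_nonneg hLn
  obtain rfl | hn := Nat.eq_or_lt_of_le (Nat.succ_le_of_lt hn)
  · have := le_modConv_polarSet_image_sub_of_dim_one hL h0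
      (fun P => by linarith [hup P]) (fun P => by simpa using hneg P) ht0 ht1
    norm_num at this ⊢
    exact this
  · exact le_modConv_polarSet_image_sub_of_two_le hL (interior_subset h0) (by exact_mod_cast hn)
      hup hneg (supportFun_pos hL h0 (x := EuclideanSpace.single ⟨0, by omega⟩ 1) (by simp))
      ht0 ht1

theorem modConv_polar_translate_ge_general {n : ℕ} (L : Set (EuclideanSpace ℝ (Fin n)))
    (hLcomp : IsCompact L) (hLconv : Convex ℝ L) (h0 : 0 ∈ interior L)
    (hLn : L ⊆ (-(n : ℝ)) • L)
    (z : EuclideanSpace ℝ (Fin n)) (hz : z ∈ ((n : ℝ) / ((n : ℝ) + 1)) • L)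
    (t : ℝ) (ht0 : 0 ≤ t) (ht1 : t ≤ 1) :
    modConv (polarSet ((fun w => w - z) '' L)) t ≥
      modConv (polarSet L) (t / (4 * (n : ℝ) ^ 3)) / (2 * (n : ℝ)) :=
  modConv_polar_translate_ge_general_general L hLcomp h0 hLn z hz t ht0 ht1
end

section
/- Let n ≥ 2 and suppose γ₁, …, γ_{M} are positive reals summing to 1 with M ≤ n+1, and suppose r ≥ 0 satisfies r < 1/(3n² + n) and for each k, 2r ≥ γ_k − (1−γ_k)/n − (1−γ_k)r. Then M = n + 1 and for each k, (1 + nr − 3n²r)/(n+1+nr) ≤ γ_k ≤ (1 + 3nr)/(n+1+nr). -/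
/-!
Each constraint on `γ k` is linear in `γ k` and rearranges to `γ k ≤ U := (1 + 3nr)/(n + 1 + nr)`.
The smallness of `r` gives `n U < 1`, so `n` coefficients cannot sum to `1` and `M = n + 1`;
then `γ k = 1 - ∑_{j ≠ k} γ j ≥ 1 - n U`, which is the lower bound.
-/

open Finset

theorem Finset.sum_le_add_card_sub_one_mul {ι : Type*} [Fintype ι] [DecidableEq ι]
    {f : ι → ℝ} {U : ℝ} (hf : ∀ i, f i ≤ U) (k : ι) :
    ∑ i, f i ≤ f k + ((Fintype.card ι : ℝ) - 1) * U := by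
  have hrest : ∑ i ∈ univ.erase k, f i ≤ (univ.erase k).card • U :=
    sum_le_card_nsmul _ _ _ fun i _ => hf i
  rw [card_erase_of_mem (mem_univ k), card_univ, nsmul_eq_mul,
    Nat.cast_pred (Fintype.card_pos_iff.mpr ⟨k⟩)] at hrest
  rw [← add_sum_erase _ _ (mem_univ k)]
  linarith

namespace Caratheodory

noncomputable def upper (n r : ℝ) : ℝ := (1 + 3 * n * r) / (n + 1 + n * r)

variable {n r : ℝ}

theorem upper_nonneg (hn : 0 ≤ n) (hr0 : 0 ≤ r) : 0 ≤ upper n r := by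
  unfold upper
  positivity

theorem le_upper_of_two_mul_ge (hn : 0 < n) (hr0 : 0 ≤ r) {g : ℝ}
    (h : 2 * r ≥ g - (1 - g) / n - (1 - g) * r) : g ≤ upper n r := by
  have hdiv : (1 - g) / n * n = 1 - g := div_mul_cancel₀ _ hn.ne'
  rw [upper, le_div_iff₀ (by positivity)]
  nlinarith

theorem mul_upper_lt_one (hn : 0 < n) (hr0 : 0 ≤ r) (hr : r < 1 / (3 * n ^ 2 + n)) :
    n * upper n r < 1 := by
  have hd : 0 < n + 1 + n * r := by positivity
  have hr' : r * (3 * n ^ 2 + n) < 1 := (lt_div_iff₀ (by positivity)).mp hr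
  rw [upper, ← mul_div_assoc, div_lt_one hd]
  nlinarith

theorem one_sub_mul_upper (hn : 0 ≤ n) (hr0 : 0 ≤ r) :
    1 - n * upper n r = (1 + n * r - 3 * n ^ 2 * r) / (n + 1 + n * r) := by
  have hd : 0 < n + 1 + n * r := by positivity
  rw [upper]
  field_simp
  ring

end Caratheodory

open Caratheodory

theorem caratheodory_coefficients_bounds_general (n M : ℕ) (hn : 2 ≤ n) (hM : M ≤ n + 1)
    (γ : Fin M → ℝ) (hsum : ∑ k, γ k = 1)
    (r : ℝ) (hr0 : 0 ≤ r) (hr : r < 1 / (3 * (n : ℝ) ^ 2 + n))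
    (hineq : ∀ k, 2 * r ≥ γ k - (1 - γ k) / n - (1 - γ k) * r) :
    M = n + 1 ∧ ∀ k,
      (1 + n * r - 3 * (n : ℝ) ^ 2 * r) / (n + 1 + n * r) ≤ γ k ∧
      γ k ≤ (1 + 3 * n * r) / (n + 1 + n * r) := by
  have hn0 : (0 : ℝ) < n := by exact_mod_cast (by omega : 0 < n)
  have hU : ∀ k, γ k ≤ upper n r := fun k => le_upper_of_two_mul_ge hn0 hr0 (hineq k)
  have hnU : n * upper n r < 1 := mul_upper_lt_one hn0 hr0 hr
  have hMeq : M = n + 1 := by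
    by_contra hne
    have hMn : (M : ℝ) ≤ n := by exact_mod_cast (by omega : M ≤ n)
    have hsumU : ∑ k, γ k ≤ M * upper n r := by
      simpa using sum_le_card_nsmul univ γ _ fun k _ => hU k
    nlinarith [upper_nonneg hn0.le hr0]
  subst hMeq
  refine ⟨rfl, fun k => ⟨?_, hU k⟩⟩
  have hk := sum_le_add_card_sub_one_mul hU k
  rw [hsum, Fintype.card_fin, Nat.cast_succ, add_sub_cancel_right] at hk
  rw [← one_sub_mul_upper hn0.le hr0]
  linarith

theorem caratheodory_coefficients_bounds (n M : ℕ) (hn : 2 ≤ n) (hM : M ≤ n + 1)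
    (γ : Fin M → ℝ) (hpos : ∀ k, 0 < γ k) (hsum : ∑ k, γ k = 1)
    (r : ℝ) (hr0 : 0 ≤ r) (hr : r < 1 / (3 * (n : ℝ) ^ 2 + n))
    (hineq : ∀ k, 2 * r ≥ γ k - (1 - γ k) / n - (1 - γ k) * r) :
    M = n + 1 ∧ ∀ k,
      (1 + n * r - 3 * (n : ℝ) ^ 2 * r) / (n + 1 + n * r) ≤ γ k ∧
      γ k ≤ (1 + 3 * n * r) / (n + 1 + n * r) :=
  caratheodory_coefficients_bounds_general n M hn hM γ hsum r hr0 hr hineq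
end
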